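/- arXiv:1601.04980 — 2 statements merged into one kernel-verified Lean document; each statement's English description precedes it below -/
import Mathlib

section
/- Let M be a multi-context system and η a set of integrity constraints over M, and let M' be the MCS obtained from M by adding the extra context C_0 (with kb_0 = ∅, ACC_0(∅) = {∅}, ACC_0({*}) = ∅) and, for each integrity constraint in η, a bridge rule with head (0:*) and the same body. Then M' is logically consistent (has an equilibrium) if and only if M weakly satisfies η. (Hence weak satisfaction of integrity constraints is reducible to logical consistency.) -/
/-- A ground bridge rule `(i : head) ← pos, not neg` of context `i`:
`pos` and `neg` are sets of pairs `(c, p)` meaning "belief `p` queried in context `c`". -/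
structure BridgeRule (ι α : Type*) where
  head : α
  pos : Set (ι × α)
  neg : Set (ι × α)

/-- A ground integrity constraint `← pos, not neg` over an MCS. -/
structure IntegrityConstraint (ι α : Type*) where
  pos : Set (ι × α)
  neg : Set (ι × α)

/-- A context of an MCS: a logic (given by its semantics `ACC`, mapping each
knowledge base to its set of acceptable belief sets), a knowledge base `kb`,
and a set of bridge rules `br`. -/
structure Context (ι α : Type*) where
  ACC : Set α → Set (Set α)
  kb : Set α
  br : Set (BridgeRule ι α)

/-- A multi-context system: a family of contexts indexed by `ι`. -/
abbrev MCS (ι α : Type*) := ι → Context ι α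

/-- A belief state: one belief set per context. -/
abbrev BeliefState (ι α : Type*) := ι → Set α

/-- A bridge rule is applicable in a belief state `S` if every positive body
literal holds in the corresponding belief set and no negative one does. -/
def BridgeRule.applicable {ι α : Type*} (r : BridgeRule ι α) (S : BeliefState ι α) : Prop :=
  (∀ q ∈ r.pos, q.2 ∈ S q.1) ∧ ∀ q ∈ r.neg, q.2 ∉ S q.1

/-- `app M i S`: the heads of the applicable bridge rules of context `i` w.r.t. `S`. -/
def app {ι α : Type*} (M : MCS ι α) (i : ι) (S : BeliefState ι α) : Set α :=
  {a | ∃ r ∈ (M i).br, r.applicable S ∧ r.head = a}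

/-- `S` is an equilibrium of `M` if `S i ∈ ACC_i (kb_i ∪ app_i S)` for every `i`. -/
def IsEquilibrium {ι α : Type*} (M : MCS ι α) (S : BeliefState ι α) : Prop :=
  ∀ i, S i ∈ (M i).ACC ((M i).kb ∪ app M i S)

/-- Logical consistency: existence of an equilibrium. -/
def LogConsistent {ι α : Type*} (M : MCS ι α) : Prop :=
  ∃ S, IsEquilibrium M S

/-- A belief state satisfies an integrity constraint unless all its positive body
literals hold and all its negative body literals fail. -/
def Satisfies {ι α : Type*} (S : BeliefState ι α) (c : IntegrityConstraint ι α) : Prop :=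
  ¬ ((∀ q ∈ c.pos, q.2 ∈ S q.1) ∧ ∀ q ∈ c.neg, q.2 ∉ S q.1)

/-- `M` weakly satisfies `η`: some equilibrium of `M` satisfies every IC in `η`. -/
def WeakSat {ι α : Type*} (M : MCS ι α) (η : Set (IntegrityConstraint ι α)) : Prop :=
  ∃ S, IsEquilibrium M S ∧ ∀ c ∈ η, Satisfies S c

/-- `M` strongly satisfies `η`: `M` is logically consistent and every
equilibrium of `M` satisfies every IC in `η`. -/
def StrongSat {ι α : Type*} (M : MCS ι α) (η : Set (IntegrityConstraint ι α)) : Prop :=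
  LogConsistent M ∧ ∀ S, IsEquilibrium M S → ∀ c ∈ η, Satisfies S c

/-- Relabel a body literal for the extended system (old contexts become `some i`). -/
def liftPair {ι α : Type*} (q : ι × α) : Option ι × α := (some q.1, q.2)

/-- Lift a bridge rule of `M` to the extended system. -/
def liftRule {ι α : Type*} (r : BridgeRule ι α) : BridgeRule (Option ι) α :=
  ⟨r.head, liftPair '' r.pos, liftPair '' r.neg⟩

/-- The bridge rule `(0 : *) ← body of c` obtained from an integrity constraint `c`. -/
def icRule {ι α : Type*} (star : α) (c : IntegrityConstraint ι α) : BridgeRule (Option ι) α :=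
  ⟨star, liftPair '' c.pos, liftPair '' c.neg⟩

/-- The MCS obtained from `M` by adding an extra context `C₀` (index `none`)
with empty knowledge base, semantics `ACC0`, and, for each integrity constraint
in `η`, a bridge rule with head `(0 : *)` and the same body. -/
def extMCS {ι α : Type*} (M : MCS ι α) (η : Set (IntegrityConstraint ι α))
    (star : α) (ACC0 : Set α → Set (Set α)) : MCS (Option ι) α :=
  fun o => match o with
  | some i => ⟨(M i).ACC, (M i).kb, liftRule '' (M i).br⟩
  | none => ⟨ACC0, ∅, icRule star '' η⟩

/-! In an equilibrium of `M'` the belief set of `C₀` must be acceptable for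
`app₀`, which is `{*}` exactly when some integrity constraint is violated by the restriction
to `M`, and `∅` otherwise. Since `ACC₀ {*} = ∅` and `ACC₀ ∅ = {∅}`, equilibria of `M'` are
precisely the equilibria of `M` satisfying `η`, extended by the empty belief set at `C₀`. -/

section ExtMCS
variable {ι α : Type*}

lemma liftRule_applicable_iff (r : BridgeRule ι α) (S : BeliefState (Option ι) α) :
    (liftRule r).applicable S ↔ r.applicable (S ∘ some) := by
  simp only [liftRule, BridgeRule.applicable, Set.forall_mem_image, liftPair, Function.comp]

lemma icRule_applicable_iff (star : α) (c : IntegrityConstraint ι α)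
    (S : BeliefState (Option ι) α) :
    (icRule star c).applicable S ↔ ¬ Satisfies (S ∘ some) c := by
  simp only [icRule, BridgeRule.applicable, Set.forall_mem_image, liftPair, Satisfies, not_not,
    Function.comp]

variable (M : MCS ι α) (η : Set (IntegrityConstraint ι α)) (star : α)
  (ACC0 : Set α → Set (Set α))

lemma app_extMCS_some (i : ι) (S : BeliefState (Option ι) α) :
    app (extMCS M η star ACC0) (some i) S = app M i (S ∘ some) := by
  ext a
  simp only [app, extMCS, Set.mem_ofPred_eq, Set.exists_mem_image, liftRule_applicable_iff]
  rfl

open Classical in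
lemma app_extMCS_none (S : BeliefState (Option ι) α) :
    app (extMCS M η star ACC0) none S = if ∀ c ∈ η, Satisfies (S ∘ some) c then ∅ else {star} := by
  ext a
  simp only [app, extMCS, Set.mem_ofPred_eq, Set.exists_mem_image, icRule_applicable_iff]
  split_ifs with hsat
  · simpa using fun c hc hviol => absurd (hsat c hc) hviol
  · push Not at hsat
    obtain ⟨c, hc, hviol⟩ := hsat
    exact ⟨fun ⟨_, _, _, ha⟩ => ha.symm, fun ha => ⟨c, hc, hviol, ha.symm⟩⟩

open Classical in
lemma isEquilibrium_extMCS_iff (S : BeliefState (Option ι) α) :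
    IsEquilibrium (extMCS M η star ACC0) S ↔
      IsEquilibrium M (S ∘ some) ∧
        S none ∈ ACC0 (if ∀ c ∈ η, Satisfies (S ∘ some) c then ∅ else {star}) := by
  rw [IsEquilibrium, Option.forall, and_comm]
  simp only [app_extMCS_some, app_extMCS_none]
  simp [extMCS, IsEquilibrium]

end ExtMCS

/-- `M'` (the extension of `M` by the context `C₀` with
`kb₀ = ∅`, `ACC₀ ∅ = {∅}`, `ACC₀ {*} = ∅`, and a bridge rule `(0:*) ← body r`
for each `r ∈ η`) is logically consistent iff `M` weakly satisfies `η`. -/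
theorem weak_satisfaction_reducible_to_consistency
    {ι α : Type*} (M : MCS ι α) (η : Set (IntegrityConstraint ι α))
    (star : α) (ACC0 : Set α → Set (Set α))
    (hACC0_empty : ACC0 ∅ = {∅}) (hACC0_star : ACC0 {star} = ∅) :
    LogConsistent (extMCS M η star ACC0) ↔ WeakSat M η := by
  constructor
  · rintro ⟨S, hS⟩
    obtain ⟨hM, hC₀⟩ := (isEquilibrium_extMCS_iff M η star ACC0 S).1 hS
    refine ⟨S ∘ some, hM, ?_⟩
    by_contra hviol
    rw [if_neg hviol, hACC0_star] at hC₀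
    exact hC₀
  · rintro ⟨S, hS, hsat⟩
    have hrestrict : Option.elim' ∅ S ∘ some = S := rfl
    refine ⟨Option.elim' ∅ S, (isEquilibrium_extMCS_iff M η star ACC0 _).2 ?_⟩
    rw [hrestrict, if_pos hsat, hACC0_empty]
    exact ⟨hS, rfl⟩
end

section
/- Let DB be a relational database over a first-order signature Σ and η a set of integrity constraints over DB in denial clausal form. Then the following are equivalent: (i) DB satisfies all integrity constraints in η (in the classical database sense); (ii) the single-context MCS Ctx(DB) strongly satisfies br(η); (iii) Ctx(DB) weakly satisfies br(η), where br translates each denial-form constraint into the corresponding headless MCS integrity constraint. -/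
/-- Ground literals over a type `β` of ground atoms: `Sum.inl a` is the atom `a`,
`Sum.inr a` is the negated atom `¬ a`. -/
abbrev Lit (β : Type*) := β ⊕ β

/-- `kb^⊢ = kb ∪ {¬a | a ∉ kb}`: the closed-world closure of a set of ground atoms. -/
def dbClosure {β : Type*} (kb : Set β) : Set (Lit β) :=
  Sum.inl '' kb ∪ Sum.inr '' kbᶜ

/-- The "database" semantics: a knowledge base (a set of ground atoms, embedded as
positive literals) has exactly one acceptable belief set, its closed-world closure. -/
def dbACC {β : Type*} (kb : Set (Lit β)) : Set (Set (Lit β)) :=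
  {dbClosure {a | Sum.inl a ∈ kb}}

/-- `Ctx(DB)`: the single-context MCS generated by a relational database `DB`
(knowledge base `DB`, closed-world semantics, no bridge rules). -/
def CtxDB {β : Type*} (DB : Set β) : MCS Unit (Lit β) :=
  fun _ => ⟨dbACC, Sum.inl '' DB, ∅⟩

/-- An integrity constraint over a database in denial clausal form,
`∀ (A₁ ∧ ... ∧ A_k ∧ ¬B₁ ∧ ... ∧ ¬B_m → ⊥)`, represented semantically by the
family of its ground instances: `σ` is the type of ground instantiations `θ` of
its variables, and `A θ` (resp. `B θ`) is the set of ground atoms `Aᵢθ` (resp. `Bⱼθ`). -/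
structure DenialIC (β σ : Type*) where
  A : σ → Set β
  B : σ → Set β

/-- `DB` satisfies a denial-form constraint: no ground instantiation makes all the
`Aᵢθ` members of `DB` and all the `Bⱼθ` non-members of `DB`. -/
def DBSatisfies {β σ : Type*} (DB : Set β) (r : DenialIC β σ) : Prop :=
  ∀ θ, ¬ ((∀ a ∈ r.A θ, a ∈ DB) ∧ ∀ b ∈ r.B θ, b ∉ DB)

/-- The ground instance at `θ` of the MCS integrity constraint
`br(r) = ← (1:A₁), ..., (1:A_k), not (1:B₁), ..., not (1:B_m)` over `Ctx(DB)`. -/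
def brInst {β σ : Type*} (r : DenialIC β σ) (θ : σ) : IntegrityConstraint Unit (Lit β) :=
  ⟨(fun a => ((), Sum.inl a)) '' r.A θ, (fun b => ((), Sum.inl b)) '' r.B θ⟩

/-- `br(η)`: the set of all ground instances of the translations of the constraints in `η`. -/
def brSet {β σ : Type*} (η : Set (DenialIC β σ)) : Set (IntegrityConstraint Unit (Lit β)) :=
  {c | ∃ r ∈ η, ∃ θ, c = brInst r θ}

/-! `Ctx(DB)` has no bridge rules, so its only equilibrium is the closed-world closure
`DB^⊢`. Strong and weak satisfaction therefore both reduce to satisfaction in `DB^⊢`, and the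
translated constraints only query positive literals, which lie in `DB^⊢` exactly when their
atoms lie in `DB`. -/

section UniqueEquilibrium

variable {ι α : Type*} {M : MCS ι α} {S₀ : BeliefState ι α}

theorem strongSat_iff_of_isEquilibrium_iff (hM : ∀ S, IsEquilibrium M S ↔ S = S₀)
    (η : Set (IntegrityConstraint ι α)) :
    StrongSat M η ↔ ∀ c ∈ η, Satisfies S₀ c := by
  refine ⟨fun h => h.2 S₀ ((hM S₀).2 rfl), fun h => ⟨⟨S₀, (hM S₀).2 rfl⟩, ?_⟩⟩
  intro S hS
  rwa [(hM S).1 hS]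

theorem weakSat_iff_of_isEquilibrium_iff (hM : ∀ S, IsEquilibrium M S ↔ S = S₀)
    (η : Set (IntegrityConstraint ι α)) :
    WeakSat M η ↔ ∀ c ∈ η, Satisfies S₀ c := by
  simp only [WeakSat, hM, exists_eq_left]

end UniqueEquilibrium

section CtxDB

variable {β σ : Type*} (DB : Set β)

@[simp]
theorem inl_mem_dbClosure (a : β) : Sum.inl a ∈ dbClosure DB ↔ a ∈ DB := by
  simp [dbClosure]

theorem app_ctxDB (i : Unit) (S : BeliefState Unit (Lit β)) : app (CtxDB DB) i S = ∅ := by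
  simp [app, CtxDB]

theorem isEquilibrium_ctxDB_iff (S : BeliefState Unit (Lit β)) :
    IsEquilibrium (CtxDB DB) S ↔ S = fun _ => dbClosure DB := by
  have hkb : {a : β | (Sum.inl a : Lit β) ∈ Sum.inl '' DB} = DB :=
    Set.preimage_image_eq DB Sum.inl_injective
  simp only [IsEquilibrium, app_ctxDB, Set.union_empty, CtxDB, dbACC, Set.mem_singleton_iff,
    hkb, funext_iff]

theorem satisfies_brInst_iff (r : DenialIC β σ) (θ : σ) :
    Satisfies (fun _ => dbClosure DB) (brInst r θ) ↔
      ¬ ((∀ a ∈ r.A θ, a ∈ DB) ∧ ∀ b ∈ r.B θ, b ∉ DB) := by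
  simp only [Satisfies, brInst, Set.forall_mem_image, inl_mem_dbClosure]

theorem forall_satisfies_brSet_iff (η : Set (DenialIC β σ)) :
    (∀ c ∈ brSet η, Satisfies (fun _ => dbClosure DB) c) ↔ ∀ r ∈ η, DBSatisfies DB r := by
  simp only [DBSatisfies, ← satisfies_brInst_iff]
  exact ⟨fun h r hr θ => h _ ⟨r, hr, θ, rfl⟩, fun h _ ⟨r, hr, θ, hc⟩ => hc ▸ h r hr θ⟩

end CtxDB

theorem db_ic_satisfaction_iff_general
    {β σ : Type*} (DB : Set β) (η : Set (DenialIC β σ)) :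
    ((∀ r ∈ η, DBSatisfies DB r) ↔ StrongSat (CtxDB DB) (brSet η))
    ∧ ((∀ r ∈ η, DBSatisfies DB r) ↔ WeakSat (CtxDB DB) (brSet η)) := by
  have hS := isEquilibrium_ctxDB_iff DB
  rw [strongSat_iff_of_isEquilibrium_iff hS, weakSat_iff_of_isEquilibrium_iff hS,
    forall_satisfies_brSet_iff]
  exact ⟨Iff.rfl, Iff.rfl⟩

/-- For a relational database `DB` and a set `η` of integrity
constraints over `DB` in denial clausal form, the following are equivalent:
(i) `DB` satisfies all constraints in `η`; (ii) `Ctx(DB)` strongly satisfies `br(η)`;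
(iii) `Ctx(DB)` weakly satisfies `br(η)`. -/
theorem db_ic_satisfaction_iff
    {β σ : Type*} (DB : Set β) (hfin : DB.Finite) (η : Set (DenialIC β σ)) :
    ((∀ r ∈ η, DBSatisfies DB r) ↔ StrongSat (CtxDB DB) (brSet η))
    ∧ ((∀ r ∈ η, DBSatisfies DB r) ↔ WeakSat (CtxDB DB) (brSet η)) :=
  db_ic_satisfaction_iff_general DB η
end
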